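/- In the calculus L_lcc, applicative similarity, Q_lcc-similarity and the inductive Q_lcc-preorder all coincide on closed expressions: ≼_lcc = ≼_{lcc,Q_lcc} = ≤_{lcc,Q_lcc}; moreover their open extensions coincide: ≼_lcc^o = ≼_{lcc,Q_lcc}^o = ≤_{lcc,Q_lcc}^o. -/

import Mathlib

/-! # Core syntax for the calculi L_lcc, L_name and LR

Following Schmidt-Schauß, Sabel, Machkasova,
"Simulation in the Call-by-Need Lambda-Calculus with Letrec, Case, Constructors, and Seq".

Expressions use de Bruijn indices.  A signature fixes the set of types, the data
constructors of each type together with their arities, and a distinguished type `Bool`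
with the 0-ary constructors `True` and `False`. -/

structure Sig : Type 1 where
  TyName : Type
  CName : TyName → Type
  deceq : ∀ T, DecidableEq (CName T)
  arity : ∀ T, CName T → ℕ
  boolTy : TyName
  trueC : CName boolTy
  falseC : CName boolTy
  true_arity : arity boolTy trueC = 0
  false_arity : arity boolTy falseC = 0
  true_ne_false : trueC ≠ falseC

variable (S : Sig)

/-- ℒ-expressions (de Bruijn): variables, applications, abstractions, fully saturated
constructor applications, `seq`, `case` (with exactly one alternative per constructor
of the scrutinized type; the alternative for `c` binds `arity c` variables), and
`letrec` with `n+1` mutually recursive bindings (so at least one binding); the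
bindings and the body are under the `n+1` letrec binders.
The letrec-free expressions are the expressions of `L_lcc`. -/
inductive Exp : Type where
  | var : ℕ → Exp
  | app : Exp → Exp → Exp
  | lam : Exp → Exp
  | constr : (T : S.TyName) → (c : S.CName T) → (Fin (S.arity T c) → Exp) → Exp
  | seqE : Exp → Exp → Exp
  | caseE : (T : S.TyName) → Exp → ((c : S.CName T) → Exp) → Exp
  | letrecE : (n : ℕ) → (Fin (n+1) → Exp) → Exp → Exp

namespace Core

variable {S}

/-- lift a renaming under `m` binders -/
def liftN (m : ℕ) (f : ℕ → ℕ) : ℕ → ℕ := fun k => if k < m then k else f (k - m) + m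

/-- renaming of de Bruijn indices -/
def rename (f : ℕ → ℕ) : Exp S → Exp S
  | .var k => .var (f k)
  | .app u v => .app (rename f u) (rename f v)
  | .lam u => .lam (rename (liftN 1 f) u)
  | .constr T c args => .constr T c (fun i => rename f (args i))
  | .seqE u v => .seqE (rename f u) (rename f v)
  | .caseE T e alts => .caseE T (rename f e) (fun c => rename (liftN (S.arity T c) f) (alts c))
  | .letrecE n b t => .letrecE n (fun i => rename (liftN (n+1) f) (b i)) (rename (liftN (n+1) f) t)

/-- lift a substitution under `m` binders -/
def upN (m : ℕ) (σ : ℕ → Exp S) : ℕ → Exp S :=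
  fun k => if k < m then .var k else rename (· + m) (σ (k - m))

/-- parallel substitution -/
def subst (σ : ℕ → Exp S) : Exp S → Exp S
  | .var k => σ k
  | .app u v => .app (subst σ u) (subst σ v)
  | .lam u => .lam (subst (upN 1 σ) u)
  | .constr T c args => .constr T c (fun i => subst σ (args i))
  | .seqE u v => .seqE (subst σ u) (subst σ v)
  | .caseE T e alts => .caseE T (subst σ e) (fun c => subst (upN (S.arity T c) σ) (alts c))
  | .letrecE n b t => .letrecE n (fun i => subst (upN (n+1) σ) (b i)) (subst (upN (n+1) σ) t)

/-- the substitution `[t/x0]` for the outermost binder -/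
def consSub (t : Exp S) : ℕ → Exp S
  | 0 => t
  | (k+1) => .var k

/-- the substitution replacing the `m` innermost binders by `args` -/
def instSub {m : ℕ} (args : Fin m → Exp S) : ℕ → Exp S :=
  fun k => if h : k < m then args ⟨k, h⟩ else .var (k - m)

/-- `closedUnder d e`: all free de Bruijn indices of `e` are `< d` -/
def closedUnder : ℕ → Exp S → Prop
  | d, .var k => k < d
  | d, .app u v => closedUnder d u ∧ closedUnder d v
  | d, .lam u => closedUnder (d+1) u
  | d, .constr _ _ args => ∀ i, closedUnder d (args i)
  | d, .seqE u v => closedUnder d u ∧ closedUnder d v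
  | d, .caseE T e alts => closedUnder d e ∧ ∀ c, closedUnder (d + S.arity T c) (alts c)
  | d, .letrecE n b t => (∀ i, closedUnder (d + (n+1)) (b i)) ∧ closedUnder (d + (n+1)) t

/-- a closed expression -/
def closed (e : Exp S) : Prop := closedUnder 0 e

/-- letrec-free expressions, i.e. the expressions of the calculus `L_lcc` -/
def lfree : Exp S → Prop
  | .var _ => True
  | .app u v => lfree u ∧ lfree v
  | .lam u => lfree u
  | .constr _ _ args => ∀ i, lfree (args i)
  | .seqE u v => lfree u ∧ lfree v
  | .caseE _ e alts => lfree e ∧ ∀ c, lfree (alts c)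
  | .letrecE _ _ _ => False

/-- values: abstractions and constructor applications -/
def isValue : Exp S → Prop
  | .lam _ => True
  | .constr _ _ _ => True
  | _ => False

/-- constructor applications -/
def isConstrApp (e : Exp S) : Prop := ∃ T c args, e = .constr T c args

/-- the diverging expression `Ω = (λz. z z) (λx. x x)` -/
def Omega : Exp S :=
  .app (.lam (.app (.var 0) (.var 0))) (.lam (.app (.var 0) (.var 0)))

/-- the constructor `True` (of the distinguished type `Bool`, arity 0) -/
def trueE : Exp S := .constr S.boolTy S.trueC (fun _ => .var 0)

/-- update the alternative for constructor `c0` -/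
def updAlt {T : S.TyName} (alts : (c : S.CName T) → Exp S) (c0 : S.CName T) (e : Exp S) :
    (c : S.CName T) → Exp S :=
  fun c => letI := S.deceq T; if c = c0 then e else alts c

end Core
namespace Core

variable {S : Sig}

/-! ## Contexts -/

/-- reduction contexts of `L_lcc` (and `A`-contexts of `L_name`):
`A ::= [·] | (A s) | (case_T A of alts) | (seq A s)` -/
inductive ACtx (S : Sig) : Type where
  | hole : ACtx S
  | appA : ACtx S → Exp S → ACtx S
  | seqA : ACtx S → Exp S → ACtx S
  | caseA : (T : S.TyName) → ACtx S → ((c : S.CName T) → Exp S) → ACtx S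

/-- plugging an expression into an `A`-context -/
def plugA : ACtx S → Exp S → Exp S
  | .hole, e => e
  | .appA A t, e => .app (plugA A e) t
  | .seqA A t, e => .seqE (plugA A e) t
  | .caseA T A alts, e => .caseE T (plugA A e) alts

/-- renaming an `A`-context (there are no binders above the hole) -/
def renameA (f : ℕ → ℕ) : ACtx S → ACtx S
  | .hole => .hole
  | .appA A t => .appA (renameA f A) (rename f t)
  | .seqA A t => .seqA (renameA f A) (rename f t)
  | .caseA T A alts => .caseA T (renameA f A) (fun c => rename (liftN (S.arity T c) f) (alts c))

/-- general (one-hole, possibly capturing) contexts over ℒ-expressions -/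
inductive Ctx (S : Sig) : Type where
  | hole : Ctx S
  | appL : Ctx S → Exp S → Ctx S
  | appR : Exp S → Ctx S → Ctx S
  | lamC : Ctx S → Ctx S
  | seqL : Ctx S → Exp S → Ctx S
  | seqR : Exp S → Ctx S → Ctx S
  | constrC : (T : S.TyName) → (c : S.CName T) → Fin (S.arity T c) →
      (Fin (S.arity T c) → Exp S) → Ctx S → Ctx S
  | caseScrut : (T : S.TyName) → Ctx S → ((c : S.CName T) → Exp S) → Ctx S
  | caseAlt : (T : S.TyName) → (c0 : S.CName T) → Exp S → ((c : S.CName T) → Exp S) →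
      Ctx S → Ctx S
  | letrecB : (n : ℕ) → Fin (n+1) → (Fin (n+1) → Exp S) → Ctx S → Exp S → Ctx S
  | letrecT : (n : ℕ) → (Fin (n+1) → Exp S) → Ctx S → Ctx S

/-- plugging (capture-permitting) into a general context -/
def plugC : Ctx S → Exp S → Exp S
  | .hole, e => e
  | .appL C t, e => .app (plugC C e) t
  | .appR t C, e => .app t (plugC C e)
  | .lamC C, e => .lam (plugC C e)
  | .seqL C t, e => .seqE (plugC C e) t
  | .seqR t C, e => .seqE t (plugC C e)
  | .constrC T c i args C, e => .constr T c (Function.update args i (plugC C e))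
  | .caseScrut T C alts, e => .caseE T (plugC C e) alts
  | .caseAlt T c0 scrut alts C, e => .caseE T scrut (updAlt alts c0 (plugC C e))
  | .letrecB n i b C t, e => .letrecE n (Function.update b i (plugC C e)) t
  | .letrecT n b C, e => .letrecE n b (plugC C e)

/-- number of binders above the hole of a context -/
def depthC : Ctx S → ℕ
  | .hole => 0
  | .appL C _ => depthC C
  | .appR _ C => depthC C
  | .lamC C => depthC C + 1
  | .seqL C _ => depthC C
  | .seqR _ C => depthC C
  | .constrC _ _ _ _ C => depthC C
  | .caseScrut _ C _ => depthC C
  | .caseAlt T c0 _ _ C => depthC C + S.arity T c0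
  | .letrecB n _ _ C _ => depthC C + (n+1)
  | .letrecT n _ C => depthC C + (n+1)

/-- letrec-free contexts, i.e. the contexts of `L_lcc` -/
def lfreeCtx : Ctx S → Prop
  | .hole => True
  | .appL C t => lfreeCtx C ∧ lfree t
  | .appR t C => lfree t ∧ lfreeCtx C
  | .lamC C => lfreeCtx C
  | .seqL C t => lfreeCtx C ∧ lfree t
  | .seqR t C => lfree t ∧ lfreeCtx C
  | .constrC _ _ _ args C => (∀ i, lfree (args i)) ∧ lfreeCtx C
  | .caseScrut _ C alts => lfreeCtx C ∧ ∀ c, lfree (alts c)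
  | .caseAlt _ _ scrut alts C => lfree scrut ∧ (∀ c, lfree (alts c)) ∧ lfreeCtx C
  | .letrecB _ _ _ _ _ => False
  | .letrecT _ _ _ => False

/-! ## The calculus `L_lcc` -/

/-- the basic reduction rules (nbeta), (nseq), (ncase) of `L_lcc` -/
inductive LccBase : Exp S → Exp S → Prop where
  | nbeta {u t} : LccBase (.app (.lam u) t) (subst (consSub t) u)
  | nseq {v t} : isValue v → LccBase (.seqE v t) t
  | ncase {T c args alts} :
      LccBase (.caseE T (.constr T c args) alts) (subst (instSub args) (alts c))

/-- normal-order reduction of `L_lcc`: a basic rule inside a reduction context -/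
def lccStep (s t : Exp S) : Prop :=
  ∃ (A : ACtx S) (r r' : Exp S), LccBase r r' ∧ s = plugA A r ∧ t = plugA A r'

/-- `s` reduces in finitely many normal-order steps to the value `v` -/
def lccConvTo (s v : Exp S) : Prop := Relation.ReflTransGen lccStep s v ∧ isValue v

/-- convergence in `L_lcc` -/
def lccConv (s : Exp S) : Prop := ∃ v, lccConvTo s v

/-- contextual preorder of `L_lcc` (quantifying over the letrec-free contexts) -/
def leLcc (s t : Exp S) : Prop :=
  ∀ C : Ctx S, lfreeCtx C → lccConv (plugC C s) → lccConv (plugC C t)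

/-- contextual equivalence of `L_lcc` -/
def eqLcc (s t : Exp S) : Prop := leLcc s t ∧ leLcc t s

/-- open extension of a relation, w.r.t. closing `L_lcc`-substitutions -/
def openL (η : Exp S → Exp S → Prop) (s t : Exp S) : Prop :=
  ∀ σ : ℕ → Exp S, (∀ k, lfree (σ k)) →
    closed (subst σ s) → closed (subst σ t) → η (subst σ s) (subst σ t)

/-- `cBot`: expressions all of whose closing `L_lcc`-instances diverge -/
def cBot (s : Exp S) : Prop :=
  ∀ σ : ℕ → Exp S, (∀ k, lfree (σ k)) → closed (subst σ s) → ¬ lccConv (subst σ s)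

/-- greatest fixpoint of a (monotone) operator on relations:
the union of all post-fixed points -/
def gfpRel {α : Type*} (F : (α → α → Prop) → (α → α → Prop)) (a b : α) : Prop :=
  ∃ η, (∀ x y, η x y → F η x y) ∧ η a b

/-- the operator `F_lcc` for applicative similarity in `L_lcc` -/
def Flcc (η : Exp S → Exp S → Prop) (s t : Exp S) : Prop :=
  (∀ s', lccConvTo s (.lam s') →
      ((∃ t', lccConvTo t (.lam t') ∧ openL η s' t') ∨
       (∃ T c targs, lccConvTo t (.constr T c targs) ∧ cBot s'))) ∧
  (∀ T c args, lccConvTo s (.constr T c args) →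
      ∃ targs, lccConvTo t (.constr T c targs) ∧ ∀ i, η (args i) (targs i))

/-- applicative similarity `≼_lcc` in `L_lcc` -/
def simLcc : Exp S → Exp S → Prop := gfpRel Flcc

end Core
namespace Core

variable {S : Sig}

/-! ## The test contexts `Q_lcc` and `Q_CE` -/

/-- the context `case_T [·] of … ((c x1 … x_ar) → x_i) …`, all other alternatives `Ω` -/
def caseSelCtx (T : S.TyName) (c : S.CName T) (i : Fin (S.arity T c)) : Exp S → Exp S :=
  fun e => .caseE T e (fun c' => letI := S.deceq T; if c' = c then .var i else Omega)

/-- the context `case_T [·] of … ((c x1 … x_ar) → True) …`, all other alternatives `Ω` -/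
def caseTrueCtx (T : S.TyName) (c : S.CName T) : Exp S → Exp S :=
  fun e => .caseE T e (fun c' => letI := S.deceq T; if c' = c then trueE else Omega)

/-- the set `Q_lcc`: application to a closed `L_lcc`-expression, the selector case
contexts, and the `True` case contexts -/
def Qlcc (S : Sig) : Set (Exp S → Exp S) :=
  {f | (∃ r : Exp S, lfree r ∧ closed r ∧ f = fun e => .app e r) ∨
       (∃ T c i, f = caseSelCtx T c i) ∨
       (∃ T c, f = caseTrueCtx T c)}

/-- the set `CE_lcc` of closed letrec-free expressions generated by
`r ::= Ω | λx.s | (c r1 … r_ar)` -/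
inductive CE : Exp S → Prop where
  | omega : CE Omega
  | abs {u : Exp S} : lfree (Exp.lam u) → closed (Exp.lam u) → CE (.lam u)
  | constrI {T c} {args : Fin (S.arity T c) → Exp S} :
      (∀ i, CE (args i)) → CE (.constr T c args)

/-- the set `Q_CE`: like `Q_lcc`, but the arguments in application contexts are
restricted to `CE_lcc` -/
def QCE (S : Sig) : Set (Exp S → Exp S) :=
  {f | (∃ r : Exp S, CE r ∧ f = fun e => .app e r) ∨
       (∃ T c i, f = caseSelCtx T c i) ∨
       (∃ T c, f = caseTrueCtx T c)}

/-- `Q1 (Q2 (… (Qn s)))` -/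
def applyAll (l : List (Exp S → Exp S)) (s : Exp S) : Exp S := l.foldr (fun f e => f e) s

/-! ### `Q`-similarity and the inductive `Q`-preorder in `L_lcc` -/

/-- the `Q`-experiment operator for `L_lcc`, instantiated with a set `𝒬` of contexts -/
def FQlcc (𝒬 : Set (Exp S → Exp S)) (η : Exp S → Exp S → Prop) (s t : Exp S) : Prop :=
  ∀ v1, lccConvTo s v1 → ∃ v2, lccConvTo t v2 ∧ ∀ f ∈ 𝒬, η (f v1) (f v2)

/-- `𝒬`-similarity in `L_lcc` -/
def simQlcc (𝒬 : Set (Exp S → Exp S)) : Exp S → Exp S → Prop := gfpRel (FQlcc 𝒬)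

/-- the inductively defined preorder `≤_{lcc,𝒬}` -/
def leQlcc (𝒬 : Set (Exp S → Exp S)) (s t : Exp S) : Prop :=
  ∀ l : List (Exp S → Exp S), (∀ f ∈ l, f ∈ 𝒬) →
    lccConv (applyAll l s) → lccConv (applyAll l t)

end Core
namespace Core

variable {S : Sig}

/-! ## The call-by-need calculus `LR` -/

/-- variable-to-variable binding chains in a letrec environment -/
inductive derefChain {n : ℕ} (b : Fin (n+1) → Exp S) : Fin (n+1) → Fin (n+1) → Prop where
  | refl (i) : derefChain b i i
  | step {i j k : Fin (n+1)} : b i = .var (j : ℕ) → derefChain b j k → derefChain b i k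

/-- `Needed b body i`: binding `i` is visited by the labeling algorithm (its value is
needed), starting from the body of the top-level letrec -/
inductive Needed {n : ℕ} (b : Fin (n+1) → Exp S) (body : Exp S) : Fin (n+1) → Prop where
  | ofBody {A : ACtx S} {i : Fin (n+1)} : body = plugA A (.var (i : ℕ)) → Needed b body i
  | ofBind {k} {A : ACtx S} {i : Fin (n+1)} :
      Needed b body k → b k = plugA A (.var (i : ℕ)) → Needed b body i

/-- renaming used when merging letrec environments: the outer part
(`N` outer bindings, `M` inner bindings) -/
def rhoOut (N M : ℕ) : ℕ → ℕ := fun k => if k < N then k else k + M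

/-- renaming used when merging letrec environments: the inner part -/
def rhoIn (N M : ℕ) : ℕ → ℕ :=
  fun k => if k < M then k + N else if k < M + N then k - M else k

/-- merged environment of `(llet-in)`: outer bindings first, then inner bindings -/
def mergeEnv {n m : ℕ} (b : Fin (n+1) → Exp S) (b2 : Fin (m+1) → Exp S) :
    Fin (n+m+1+1) → Exp S :=
  fun j => if h : (j : ℕ) < n+1
    then rename (rhoOut (n+1) (m+1)) (b ⟨j, h⟩)
    else rename (rhoIn (n+1) (m+1)) (b2 ⟨(j : ℕ) - (n+1), by omega⟩)

/-- merged environment of `(llet-e)`: the environment of the letrec bound at `i`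
is flattened into the outer environment, the binding `i` becomes the inner body -/
def mergeEnvAt {n m : ℕ} (b : Fin (n+1) → Exp S) (i : Fin (n+1))
    (b2 : Fin (m+1) → Exp S) (t2 : Exp S) : Fin (n+m+1+1) → Exp S :=
  fun j => if h : (j : ℕ) < n+1
    then (if (⟨j, h⟩ : Fin (n+1)) = i
          then rename (rhoIn (n+1) (m+1)) t2
          else rename (rhoOut (n+1) (m+1)) (b ⟨j, h⟩))
    else rename (rhoIn (n+1) (m+1)) (b2 ⟨(j : ℕ) - (n+1), by omega⟩)

/-- the environment produced by `(case-in)`/`(case-e)` with `arity c = m+1`: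
all old bindings are shifted, binding `j` becomes `c y1 … y_{m+1}` for the fresh
bindings `y_q = s_q` appended at the end -/
def caseShareEnv {n m : ℕ} (b : Fin (n+1) → Exp S) (j : Fin (n+1))
    {T : S.TyName} (c : S.CName T) (h : S.arity T c = m+1)
    (args : Fin (S.arity T c) → Exp S) : Fin (n+m+1+1) → Exp S :=
  fun p => if hp : (p : ℕ) < n+1
    then (if (⟨p, hp⟩ : Fin (n+1)) = j
          then .constr T c (fun q => .var (n+1+(q : ℕ)))
          else rename (rhoOut (n+1) (m+1)) (b ⟨p, hp⟩))
    else rename (rhoOut (n+1) (m+1)) (args (Fin.cast h.symm ⟨(p : ℕ) - (n+1), by omega⟩))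

/-- the replacement for a `(case-in)`/`(case-e)` redex: `letrec z1 = y1, …, z_{m+1} = y_{m+1}
in alt`, where the `y_q` are the fresh environment bindings (indices `n+1+q` at top level) -/
def caseShareBody {n m : ℕ} {T : S.TyName} (c : S.CName T) (_h : S.arity T c = m+1)
    (alts : (c : S.CName T) → Exp S) : Exp S :=
  .letrecE m (fun q => .var (n+1+(m+1)+(q : ℕ)))
    (rename (liftN (m+1) (rhoOut (n+1) (m+1))) (alts c))

/-- the basic `LR`-rules not involving the top-level environment:
(lbeta), (seq-c), (case-c), (lapp), (lseq), (lcase) -/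
inductive LRbase : Exp S → Exp S → Prop where
  | lbeta {u t} :
      LRbase (.app (.lam u) t) (.letrecE 0 (fun _ => rename (· + 1) t) u)
  | seqc {v t} : isValue v → LRbase (.seqE v t) t
  | casec0 {T c args alts} (h : S.arity T c = 0) :
      LRbase (.caseE T (.constr T c args) alts) (alts c)
  | casec1 {T c args alts m} (h : S.arity T c = m+1) :
      LRbase (.caseE T (.constr T c args) alts)
        (.letrecE m (fun i => rename (· + (m+1)) (args (Fin.cast h.symm i))) (alts c))
  | lapp {n b e t} :
      LRbase (.app (.letrecE n b e) t) (.letrecE n b (.app e (rename (· + (n+1)) t)))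
  | lseq {n b e t} :
      LRbase (.seqE (.letrecE n b e) t) (.letrecE n b (.seqE e (rename (· + (n+1)) t)))
  | lcase {n b e T alts} :
      LRbase (.caseE T (.letrecE n b e) alts)
        (.letrecE n b (.caseE T e (fun c => rename (liftN (S.arity T c) (· + (n+1))) (alts c))))

/-- normal-order reduction `→_LR` of the call-by-need calculus `LR`:
the rules of Fig. 1, applied at the position determined by the labeling algorithm
(in the body or in a needed binding of the top-level letrec, or — for expressions
without a top-level letrec — along the application/seq/case spine). -/
inductive LRstep : Exp S → Exp S → Prop where
  /- basic rule at the top (no top-level letrec environment involved): -/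
  | topA {A : ACtx S} {r r'} : LRbase r r' → LRstep (plugA A r) (plugA A r')
  /- basic rule in the body of the top-level letrec: -/
  | bodyA {n} {b : Fin (n+1) → Exp S} {A : ACtx S} {r r'} :
      LRbase r r' → LRstep (.letrecE n b (plugA A r)) (.letrecE n b (plugA A r'))
  /- basic rule inside a needed binding: -/
  | bindA {n} {b : Fin (n+1) → Exp S} {body} {i : Fin (n+1)} {A : ACtx S} {r r'} :
      Needed b body i → b i = plugA A r → LRbase r r' →
      LRstep (.letrecE n b body) (.letrecE n (Function.update b i (plugA A r')) body)
  /- (llet-in): -/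
  | lletIn {n b m b2 t2} :
      LRstep (.letrecE n b (.letrecE m b2 t2))
        (.letrecE (n+m+1) (mergeEnv b b2) (rename (rhoIn (n+1) (m+1)) t2))
  /- (llet-e): -/
  | lletE {n b body} {i : Fin (n+1)} {m b2 t2} :
      Needed b body i → b i = .letrecE m b2 t2 →
      LRstep (.letrecE n b body)
        (.letrecE (n+m+1) (mergeEnvAt b i b2 t2) (rename (rhoOut (n+1) (m+1)) body))
  /- (cp-in): -/
  | cpIn {n} {b : Fin (n+1) → Exp S} {A : ACtx S} {i j : Fin (n+1)} {u} :
      derefChain b i j → b j = .lam u →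
      LRstep (.letrecE n b (plugA A (.var (i : ℕ)))) (.letrecE n b (plugA A (.lam u)))
  /- (cp-e): -/
  | cpE {n} {b : Fin (n+1) → Exp S} {body} {k : Fin (n+1)} {A : ACtx S} {i j : Fin (n+1)} {u} :
      Needed b body k → b k = plugA A (.var (i : ℕ)) → derefChain b i j → b j = .lam u →
      LRstep (.letrecE n b body) (.letrecE n (Function.update b k (plugA A (.lam u))) body)
  /- (seq-in): -/
  | seqIn {n} {b : Fin (n+1) → Exp S} {A : ACtx S} {i j : Fin (n+1)} {t} :
      derefChain b i j → isConstrApp (b j) →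
      LRstep (.letrecE n b (plugA A (.seqE (.var (i : ℕ)) t)))
        (.letrecE n b (plugA A t))
  /- (seq-e): -/
  | seqEe {n} {b : Fin (n+1) → Exp S} {body} {k : Fin (n+1)} {A : ACtx S} {i j : Fin (n+1)} {t} :
      Needed b body k → b k = plugA A (.seqE (.var (i : ℕ)) t) →
      derefChain b i j → isConstrApp (b j) →
      LRstep (.letrecE n b body) (.letrecE n (Function.update b k (plugA A t)) body)
  /- (case-in), scrutinized constructor of arity 0: -/
  | caseIn0 {n} {b : Fin (n+1) → Exp S} {A : ACtx S} {i j : Fin (n+1)} {T c args alts} :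
      derefChain b i j → b j = .constr T c args → S.arity T c = 0 →
      LRstep (.letrecE n b (plugA A (.caseE T (.var (i : ℕ)) alts)))
        (.letrecE n b (plugA A (alts c)))
  /- (case-e), scrutinized constructor of arity 0: -/
  | caseE0 {n} {b : Fin (n+1) → Exp S} {body} {k : Fin (n+1)} {A : ACtx S} {i j : Fin (n+1)}
      {T c args alts} :
      Needed b body k → b k = plugA A (.caseE T (.var (i : ℕ)) alts) →
      derefChain b i j → b j = .constr T c args → S.arity T c = 0 →
      LRstep (.letrecE n b body) (.letrecE n (Function.update b k (plugA A (alts c))) body)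
  /- (case-in), arity ≥ 1: the constructor arguments are shared in fresh bindings -/
  | caseIn1 {n} {b : Fin (n+1) → Exp S} {A : ACtx S} {i j : Fin (n+1)} {T c args alts m}
      (h : S.arity T c = m+1) :
      derefChain b i j → b j = .constr T c args →
      LRstep (.letrecE n b (plugA A (.caseE T (.var (i : ℕ)) alts)))
        (.letrecE (n+m+1) (caseShareEnv b j c h args)
          (plugA (renameA (rhoOut (n+1) (m+1)) A) (caseShareBody (n := n) c h alts)))
  /- (case-e), arity ≥ 1: -/
  | caseE1 {n} {b : Fin (n+1) → Exp S} {body} {k : Fin (n+1)} {A : ACtx S} {i j : Fin (n+1)}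
      {T c args alts m} (h : S.arity T c = m+1) :
      Needed b body k → b k = plugA A (.caseE T (.var (i : ℕ)) alts) →
      derefChain b i j → b j = .constr T c args →
      LRstep (.letrecE n b body)
        (.letrecE (n+m+1)
          (Function.update (caseShareEnv b j c h args)
            (Fin.castLE (by omega) k)
            (plugA (renameA (rhoOut (n+1) (m+1)) A) (caseShareBody (n := n) c h alts)))
          (rename (rhoOut (n+1) (m+1)) body))

/-- weak head normal forms of `LR`: values, `letrec Env in v` for a value `v`, and
`letrec x1 = (c s⃗), x2 = x1, …, xm = x_{m-1}, Env in xm` -/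
def isLRwhnf (s : Exp S) : Prop :=
  isValue s ∨
  ∃ (n : ℕ) (b : Fin (n+1) → Exp S) (body : Exp S), s = .letrecE n b body ∧
    (isValue body ∨ ∃ i j : Fin (n+1), body = .var (i : ℕ) ∧ derefChain b i j ∧ isConstrApp (b j))

/-- `s` reduces in finitely many `→_LR`-steps to an `LR`-WHNF `v` -/
def lrConvTo (s v : Exp S) : Prop := Relation.ReflTransGen LRstep s v ∧ isLRwhnf v

/-- convergence in `LR` -/
def lrConv (s : Exp S) : Prop := ∃ v, lrConvTo s v

/-- contextual preorder of `LR` -/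
def leLR (s t : Exp S) : Prop := ∀ C : Ctx S, lrConv (plugC C s) → lrConv (plugC C t)

/-- contextual equivalence of `LR` -/
def eqLR (s t : Exp S) : Prop := leLR s t ∧ leLR t s

end Core
namespace Core

variable {S : Sig}

/-! ## The call-by-name calculus `L_name` -/

/-- a letrec frame (one `letrec` environment) -/
def Frame (S : Sig) : Type := Σ n : ℕ, Fin (n+1) → Exp S

/-- plugging under a stack of letrec frames (`L`-contexts), outermost frame first -/
def plugFrames : List (Frame S) → Exp S → Exp S
  | [], e => e
  | ⟨n, b⟩ :: fs, e => .letrecE n b (plugFrames fs e)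

/-- looking up a de Bruijn index in a stack of letrec frames given innermost-first;
the result is weakened to the innermost level -/
def lookRev : List (Frame S) → ℕ → Option (Exp S)
  | [], _ => none
  | ⟨n, b⟩ :: rest, k =>
      if h : k < n+1 then some (b ⟨k, h⟩)
      else (lookRev rest (k - (n+1))).map (rename (· + (n+1)))

/-- the basic rules of `L_name`: (beta), (seq), (case) — with substitution —
and (lapp), (lseq), (lcase) -/
inductive NBase : Exp S → Exp S → Prop where
  | beta {u t} : NBase (.app (.lam u) t) (subst (consSub t) u)
  | seqv {v t} : isValue v → NBase (.seqE v t) t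
  | casec {T c args alts} :
      NBase (.caseE T (.constr T c args) alts) (subst (instSub args) (alts c))
  | lapp {n b e t} :
      NBase (.app (.letrecE n b e) t) (.letrecE n b (.app e (rename (· + (n+1)) t)))
  | lseq {n b e t} :
      NBase (.seqE (.letrecE n b e) t) (.letrecE n b (.seqE e (rename (· + (n+1)) t)))
  | lcase {n b e T alts} :
      NBase (.caseE T (.letrecE n b e) alts)
        (.letrecE n b (.caseE T e (fun c => rename (liftN (S.arity T c) (· + (n+1))) (alts c))))

/-- normal-order reduction `→_name` of `L_name`: a basic rule, or the copy rule (gcp),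
inside a reduction context `L[A]` -/
inductive NStep : Exp S → Exp S → Prop where
  | base {fs : List (Frame S)} {A : ACtx S} {r r'} :
      NBase r r' → NStep (plugFrames fs (plugA A r)) (plugFrames fs (plugA A r'))
  | gcp {fs : List (Frame S)} {A : ACtx S} {k : ℕ} {e : Exp S} :
      lookRev fs.reverse k = some e →
      NStep (plugFrames fs (plugA A (.var k))) (plugFrames fs (plugA A e))

/-- weak head normal forms of `L_name`: `L[v]` for a value `v` -/
def isNameWhnf (s : Exp S) : Prop :=
  ∃ (fs : List (Frame S)) (v : Exp S), s = plugFrames fs v ∧ isValue v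

/-- `s` reduces in finitely many `→_name`-steps to an `L_name`-WHNF `v` -/
def nameConvTo (s v : Exp S) : Prop := Relation.ReflTransGen NStep s v ∧ isNameWhnf v

/-- convergence in `L_name` -/
def nameConv (s : Exp S) : Prop := ∃ v, nameConvTo s v

/-- contextual preorder of `L_name` -/
def leName (s t : Exp S) : Prop := ∀ C : Ctx S, nameConv (plugC C s) → nameConv (plugC C t)

/-- contextual equivalence of `L_name` -/
def eqName (s t : Exp S) : Prop := leName s t ∧ leName t s

/-! ## The translation `N : L_name → L_lcc` via multi-fixpoint combinators -/

/-- iterated application `f a1 … an` -/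
def apps (f : Exp S) (l : List (Exp S)) : Exp S := l.foldl .app f

/-- iterated abstraction `λ^k. e` -/
def lamN : ℕ → Exp S → Exp S
  | 0, e => e
  | (k+1), e => .lam (lamN k e)

/-- shift all indices `≥ c` by `k` -/
def shiftCut (c k : ℕ) : Exp S → Exp S := rename (fun x => if x < c then x else x + k)

/-- the argument list `[g (N-1), …, g 0]`, so that after `N` beta steps the
binder with de Bruijn index `i` receives `g i` -/
def argsOf {N : ℕ} (g : Fin N → Exp S) : List (Exp S) := (List.ofFn g).reverse

/-- `U_i = (x_i' x_1' … x_n')` (under the outer binders) -/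
def Uarg (N : ℕ) (i : Fin N) : Exp S :=
  apps (.var (i : ℕ)) (argsOf (fun j : Fin N => .var (j : ℕ)))

/-- `X_i' = λ x1 … xn. F_i (x1 x1 … xn) … (xn x1 … xn)` with `F_i = λ x1 … xn. gi` -/
def Xarg (N : ℕ) (gi : Exp S) : Exp S :=
  lamN N (apps (lamN N (shiftCut N N gi))
    (argsOf (fun j : Fin N => apps (.var (j : ℕ)) (argsOf (fun l : Fin N => .var (l : ℕ))))))

/-- the translation of one letrec: `(λ x1' … xn'. (λ x1 … xn. t') U1 … Un) X1' … Xn'` -/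
def letrecTrans (N : ℕ) (g : Fin N → Exp S) (t' : Exp S) : Exp S :=
  apps (lamN N (apps (lamN N (shiftCut N N t')) (argsOf (Uarg N))))
    (argsOf (fun i => Xarg N (g i)))

/-- the translation `N : L_name → L_lcc`, eliminating letrec by multi-fixpoint
combinators; it is homomorphic on all other constructs.
(The translation `W : LR → L_name` is the identity.) -/
def Ntr : Exp S → Exp S
  | .var k => .var k
  | .app u v => .app (Ntr u) (Ntr v)
  | .lam u => .lam (Ntr u)
  | .constr T c args => .constr T c (fun i => Ntr (args i))
  | .seqE u v => .seqE (Ntr u) (Ntr v)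
  | .caseE T e alts => .caseE T (Ntr e) (fun c => Ntr (alts c))
  | .letrecE n b t => letrecTrans (n+1) (fun i => Ntr (b i)) (Ntr t)

end Core
namespace Core

variable {S : Sig}

/-! ## `Q`-similarity in `LR` -/

/-- open extension of a relation w.r.t. closing ℒ-substitutions -/
def openAll (η : Exp S → Exp S → Prop) (s t : Exp S) : Prop :=
  ∀ σ : ℕ → Exp S, closed (subst σ s) → closed (subst σ t) → η (subst σ s) (subst σ t)

/-- the `Q`-experiment operator for `LR`, instantiated with a set `𝒬` of contexts -/
def FQLR (𝒬 : Set (Exp S → Exp S)) (η : Exp S → Exp S → Prop) (s t : Exp S) : Prop :=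
  ∀ v1, lrConvTo s v1 → ∃ v2, lrConvTo t v2 ∧ ∀ f ∈ 𝒬, η (f v1) (f v2)

/-- `𝒬`-similarity in `LR` -/
def simQLR (𝒬 : Set (Exp S → Exp S)) : Exp S → Exp S → Prop := gfpRel (FQLR 𝒬)

/-- the inductively defined preorder `≤_{LR,𝒬}` -/
def leQLR (𝒬 : Set (Exp S → Exp S)) (s t : Exp S) : Prop :=
  ∀ l : List (Exp S → Exp S), (∀ f ∈ l, f ∈ 𝒬) →
    lrConv (applyAll l s) → lrConv (applyAll l t)

end Core

/-!
Both similarities are greatest fixed points, so each inclusion is a coinduction: restricted to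
closed expressions, either relation is a post-fixed point of the other operator. The experiments
of `Q_lcc` see exactly what `F_lcc` asks for: `[·] r` β-reduces an abstraction to its body
instantiated with `r` and is stuck on a constructor application, `case … → True` detects the
constructor, and the selectors project out its arguments. Conversely every closed instance of an
abstraction body is such an instance with a closed `r`.

The inductive preorder agrees with `Q`-similarity because the contexts of `Q_lcc` are reduction
contexts and normal-order reduction is deterministic: `Q[s]` converges iff `s` converges to a
value `v` with `Q[v]` convergent. The open extensions then agree pointwise.
-/

namespace Core

variable {S : Sig}

local infix:50 " ⟶* " => Relation.ReflTransGen (lccStep (S := S))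

theorem lt_add_iff_liftN_lt {f : ℕ → ℕ} {d m : ℕ} (h : ∀ k, k < d ↔ f k < m) (n k : ℕ) :
    k < d + n ↔ liftN n f k < m + n := by
  unfold liftN
  split
  · omega
  · have := h (k - n); omega

theorem closedUnder_rename_iff {f : ℕ → ℕ} {d m : ℕ} (h : ∀ k, k < d ↔ f k < m) (e : Exp S) :
    closedUnder m (rename f e) ↔ closedUnder d e := by
  induction e generalizing f d m with
  | var k => exact (h k).symm
  | app u v ihu ihv => exact and_congr (ihu h) (ihv h)
  | lam u ih => exact ih (lt_add_iff_liftN_lt h 1)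
  | constr T c args ih => exact forall_congr' fun i => ih i h
  | seqE u v ihu ihv => exact and_congr (ihu h) (ihv h)
  | caseE T e alts ihe ihalts =>
      exact and_congr (ihe h) (forall_congr' fun c => ihalts c (lt_add_iff_liftN_lt h _))
  | letrecE n b t ihb iht =>
      exact and_congr (forall_congr' fun i => ihb i (lt_add_iff_liftN_lt h _))
        (iht (lt_add_iff_liftN_lt h _))

theorem closedUnder_shift_iff (m : ℕ) {d : ℕ} (e : Exp S) :
    closedUnder (d + m) (rename (· + m) e) ↔ closedUnder d e :=
  closedUnder_rename_iff (fun k => by omega) e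

theorem closedUnder_upN {σ : ℕ → Exp S} {d d' : ℕ} (h : ∀ k < d, closedUnder d' (σ k))
    (m : ℕ) : ∀ k < d + m, closedUnder (d' + m) (upN m σ k) := by
  intro k hk
  unfold upN
  split
  · exact show k < d' + m by omega
  · exact (closedUnder_shift_iff m _).mpr (h _ (by omega))

theorem closedUnder_subst {σ : ℕ → Exp S} {d d' : ℕ} (h : ∀ k < d, closedUnder d' (σ k))
    {e : Exp S} (he : closedUnder d e) : closedUnder d' (subst σ e) := by
  induction e generalizing σ d d' with
  | var k => exact h k he
  | app u v ihu ihv => exact ⟨ihu h he.1, ihv h he.2⟩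
  | lam u ih => exact ih (closedUnder_upN h 1) he
  | constr T c args ih => exact fun i => ih i h (he i)
  | seqE u v ihu ihv => exact ⟨ihu h he.1, ihv h he.2⟩
  | caseE T e alts ihe ihalts =>
      exact ⟨ihe h he.1, fun c => ihalts c (closedUnder_upN h _) (he.2 c)⟩
  | letrecE n b t ihb iht =>
      exact ⟨fun i => ihb i (closedUnder_upN h _) (he.1 i), iht (closedUnder_upN h _) he.2⟩

theorem upN_eqOn {σ τ : ℕ → Exp S} {d : ℕ} (h : ∀ k < d, σ k = τ k) (m : ℕ) :
    ∀ k < d + m, upN m σ k = upN m τ k := by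
  intro k hk
  unfold upN
  split
  · rfl
  · rw [h _ (by omega)]

theorem subst_congr_of_closedUnder {σ τ : ℕ → Exp S} {d : ℕ} (h : ∀ k < d, σ k = τ k)
    {e : Exp S} (he : closedUnder d e) : subst σ e = subst τ e := by
  induction e generalizing σ τ d with
  | var k => exact h k he
  | app u v ihu ihv => rw [subst, subst, ihu h he.1, ihv h he.2]
  | lam u ih => rw [subst, subst, ih (upN_eqOn h 1) he]
  | constr T c args ih => simp only [subst, ih _ h (he _)]
  | seqE u v ihu ihv => rw [subst, subst, ihu h he.1, ihv h he.2]
  | caseE T e alts ihe ihalts =>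
      simp only [subst, ihe h he.1, ihalts _ (upN_eqOn h _) (he.2 _)]
  | letrecE n b t ihb iht =>
      simp only [subst, ihb _ (upN_eqOn h _) (he.1 _), iht (upN_eqOn h _) he.2]

def AgreeOnClosed (d : ℕ) (σ τ : ℕ → Exp S) : Prop := ∀ k, closedUnder d (σ k) → σ k = τ k

theorem AgreeOnClosed.upN {σ τ : ℕ → Exp S} {d : ℕ} (h : AgreeOnClosed d σ τ) (m : ℕ) :
    AgreeOnClosed (d + m) (upN m σ) (upN m τ) := by
  intro k hk
  unfold Core.upN at hk ⊢
  by_cases hkm : k < m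
  · rw [if_pos hkm, if_pos hkm]
  · rw [if_neg hkm] at hk ⊢
    rw [h _ ((closedUnder_shift_iff m _).mp hk), if_neg hkm]

/-- Only entries of `σ` that end up in `subst σ e` matter, and these are closed when the
result is. -/
theorem AgreeOnClosed.subst_eq {σ τ : ℕ → Exp S} {d : ℕ} (h : AgreeOnClosed d σ τ)
    {e : Exp S} (he : closedUnder d (subst σ e)) : subst σ e = subst τ e := by
  induction e generalizing σ τ d with
  | var k => exact h k he
  | app u v ihu ihv => rw [subst, subst, ihu h he.1, ihv h he.2]
  | lam u ih => rw [subst, subst, ih (h.upN 1) he]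
  | constr T c args ih => simp only [subst, ih _ h (he _)]
  | seqE u v ihu ihv => rw [subst, subst, ihu h he.1, ihv h he.2]
  | caseE T e alts ihe ihalts =>
      simp only [subst, ihe h he.1, ihalts _ (h.upN _) (he.2 _)]
  | letrecE n b t ihb iht =>
      simp only [subst, ihb _ (h.upN _) (he.1 _), iht (h.upN _) he.2]

theorem closedUnder_trueE (d : ℕ) : closedUnder d (trueE : Exp S) := by
  intro i
  exact (Fin.cast S.true_arity i).elim0

theorem subst_trueE (σ : ℕ → Exp S) : subst σ trueE = trueE := by
  simp only [trueE, subst]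
  congr 1
  funext i
  exact (Fin.cast S.true_arity i).elim0

theorem lfree_trueE : lfree (trueE : Exp S) := by
  intro i
  exact (Fin.cast S.true_arity i).elim0

theorem closedUnder_Omega (d : ℕ) : closedUnder d (Omega : Exp S) := by
  simp [Omega, closedUnder]

open Classical in
noncomputable def closeSub (σ : ℕ → Exp S) : ℕ → Exp S :=
  fun k => if closed (σ k) then σ k else trueE

theorem closed_closeSub (σ : ℕ → Exp S) (k : ℕ) : closed (closeSub σ k) := by
  unfold closeSub
  split
  · assumption
  · exact closedUnder_trueE 0

theorem lfree_closeSub {σ : ℕ → Exp S} (h : ∀ k, lfree (σ k)) (k : ℕ) : lfree (closeSub σ k) := by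
  unfold closeSub
  split
  · exact h k
  · exact lfree_trueE

/-- A closing substitution may carry non-closed entries at indices that do not occur;
replacing them by `True` turns the instance into a β-reduct with a closed argument. -/
theorem subst_eq_subst_consSub_closeSub {σ : ℕ → Exp S} {u : Exp S} (hu : closedUnder 1 u)
    (hσu : closed (subst σ u)) : subst σ u = subst (consSub (closeSub σ 0)) u := by
  have hagree : AgreeOnClosed 0 σ (closeSub σ) := fun k hk => (if_pos hk).symm
  rw [hagree.subst_eq hσu]
  exact subst_congr_of_closedUnder (fun k hk => by obtain rfl : k = 0 := (by omega); rfl) hu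

theorem lfree_consSub {r : Exp S} (hr : lfree r) : ∀ k, lfree (consSub r k)
  | 0 => hr
  | _ + 1 => trivial

theorem closed_subst_consSub {u r : Exp S} (hu : closedUnder 1 u) (hr : closed r) :
    closed (subst (consSub r) u) :=
  closedUnder_subst (fun k hk => by obtain rfl : k = 0 := (by omega); exact hr) hu

/-- `lccStep` with the reduction context unfolded frame by frame, so that steps can be analysed
by induction. -/
inductive SpineStep : Exp S → Exp S → Prop where
  | base {r r' : Exp S} : LccBase r r' → SpineStep r r'
  | app {s s' t : Exp S} : SpineStep s s' → SpineStep (.app s t) (.app s' t)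
  | seqE {s s' t : Exp S} : SpineStep s s' → SpineStep (.seqE s t) (.seqE s' t)
  | caseE {T : S.TyName} {s s' : Exp S} {alts : (c : S.CName T) → Exp S} :
      SpineStep s s' → SpineStep (.caseE T s alts) (.caseE T s' alts)

theorem SpineStep.plugA {s s' : Exp S} (h : SpineStep s s') :
    ∀ A : ACtx S, SpineStep (Core.plugA A s) (Core.plugA A s')
  | .hole => h
  | .appA A _ => .app (h.plugA A)
  | .seqA A _ => .seqE (h.plugA A)
  | .caseA _ A _ => .caseE (h.plugA A)

theorem lccStep_iff_spineStep {s t : Exp S} : lccStep s t ↔ SpineStep s t := by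
  constructor
  · rintro ⟨A, r, r', hr, rfl, rfl⟩
    exact (SpineStep.base hr).plugA A
  · intro h
    induction h with
    | base hr => exact ⟨.hole, _, _, hr, rfl, rfl⟩
    | app _ ih =>
        obtain ⟨A, r, r', hr, rfl, rfl⟩ := ih
        exact ⟨.appA A _, r, r', hr, rfl, rfl⟩
    | seqE _ ih =>
        obtain ⟨A, r, r', hr, rfl, rfl⟩ := ih
        exact ⟨.seqA A _, r, r', hr, rfl, rfl⟩
    | caseE _ ih =>
        obtain ⟨A, r, r', hr, rfl, rfl⟩ := ih
        exact ⟨.caseA _ A _, r, r', hr, rfl, rfl⟩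

theorem SpineStep.not_isValue {s t : Exp S} (h : SpineStep s t) : ¬ isValue s := by
  rcases h with hr | _ | _ | _
  · cases hr <;> exact id
  all_goals exact id

theorem SpineStep.app_of_isValue {v r t : Exp S} (hv : isValue v) (h : SpineStep (.app v r) t) :
    ∃ u, v = .lam u ∧ t = subst (consSub r) u := by
  cases h with
  | base hr => cases hr; exact ⟨_, rfl, rfl⟩
  | app h => exact absurd hv h.not_isValue

theorem SpineStep.caseE_of_isValue {T : S.TyName} {v t : Exp S} {alts : (c : S.CName T) → Exp S}
    (hv : isValue v) (h : SpineStep (.caseE T v alts) t) :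
    ∃ c args, v = .constr T c args ∧ t = subst (instSub args) (alts c) := by
  cases h with
  | base hr => cases hr; exact ⟨_, _, rfl, rfl⟩
  | caseE h => exact absurd hv h.not_isValue

theorem SpineStep.deterministic {s t₁ t₂ : Exp S} (h₁ : SpineStep s t₁) (h₂ : SpineStep s t₂) :
    t₁ = t₂ := by
  induction h₁ generalizing t₂ with
  | base hr =>
      cases h₂ with
      | base hr₂ => cases hr <;> cases hr₂ <;> rfl
      | app h₂ => cases hr; exact absurd trivial h₂.not_isValue
      | seqE h₂ => cases hr; exact absurd ‹_› h₂.not_isValue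
      | caseE h₂ => cases hr; exact absurd trivial h₂.not_isValue
  | app h₁ ih =>
      cases h₂ with
      | base hr₂ => cases hr₂; exact absurd trivial h₁.not_isValue
      | app h₂ => rw [ih h₂]
  | seqE h₁ ih =>
      cases h₂ with
      | base hr₂ => cases hr₂; exact absurd ‹_› h₁.not_isValue
      | seqE h₂ => rw [ih h₂]
  | caseE h₁ ih =>
      cases h₂ with
      | base hr₂ => cases hr₂; exact absurd trivial h₁.not_isValue
      | caseE h₂ => rw [ih h₂]

theorem isValue_of_isValue_plugA {A : ACtx S} {s : Exp S} (h : isValue (plugA A s)) :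
    isValue s := by
  cases A
  · exact h
  all_goals exact h.elim

theorem SpineStep.of_plugA {A : ACtx S} {s t : Exp S} (h : SpineStep (Core.plugA A s) t)
    (hs : ¬ isValue s) : ∃ s', SpineStep s s' ∧ t = Core.plugA A s' := by
  induction A generalizing t with
  | hole => exact ⟨t, h, rfl⟩
  | appA A r ih =>
      change SpineStep (.app (Core.plugA A s) r) t at h
      generalize hp : Core.plugA A s = p at h
      cases h with
      | base hr => cases hr; exact absurd (isValue_of_isValue_plugA (by rw [hp]; trivial)) hs
      | app h => obtain ⟨s', hs', rfl⟩ := ih (hp ▸ h); exact ⟨s', hs', rfl⟩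
  | seqA A r ih =>
      change SpineStep (.seqE (Core.plugA A s) r) t at h
      generalize hp : Core.plugA A s = p at h
      cases h with
      | base hr => cases hr with | nseq hv => exact absurd (isValue_of_isValue_plugA (hp ▸ hv)) hs
      | seqE h => obtain ⟨s', hs', rfl⟩ := ih (hp ▸ h); exact ⟨s', hs', rfl⟩
  | caseA T A alts ih =>
      change SpineStep (.caseE T (Core.plugA A s) alts) t at h
      generalize hp : Core.plugA A s = p at h
      cases h with
      | base hr => cases hr; exact absurd (isValue_of_isValue_plugA (by rw [hp]; trivial)) hs
      | caseE h => obtain ⟨s', hs', rfl⟩ := ih (hp ▸ h); exact ⟨s', hs', rfl⟩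

theorem SpineStep.closed {s t : Exp S} (h : SpineStep s t) (hs : closed s) : closed t := by
  induction h with
  | base hr =>
      cases hr with
      | nbeta =>
          refine closedUnder_subst (fun k hk => ?_) hs.1
          obtain rfl : k = 0 := by omega
          exact hs.2
      | nseq => exact hs.2
      | ncase =>
          refine closedUnder_subst (fun k hk => ?_) (hs.2 _)
          rw [instSub, dif_pos (by omega)]
          exact hs.1 _
  | app _ ih => exact ⟨ih hs.1, hs.2⟩
  | seqE _ ih => exact ⟨ih hs.1, hs.2⟩
  | caseE _ ih => exact ⟨ih hs.1, hs.2⟩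

theorem isValue.eq_lam_or_constr {v : Exp S} (hv : isValue v) :
    (∃ u, v = .lam u) ∨ ∃ T c args, v = .constr T c args := by
  cases v <;> simp_all [isValue]

theorem lccStep_deterministic {s t₁ t₂ : Exp S} (h₁ : lccStep s t₁) (h₂ : lccStep s t₂) :
    t₁ = t₂ :=
  (lccStep_iff_spineStep.mp h₁).deterministic (lccStep_iff_spineStep.mp h₂)

theorem not_lccStep_of_isValue {v t : Exp S} (hv : isValue v) : ¬ lccStep v t :=
  fun h => (lccStep_iff_spineStep.mp h).not_isValue hv

theorem lccStep_beta (u r : Exp S) : lccStep (.app (.lam u) r) (subst (consSub r) u) :=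
  ⟨.hole, _, _, .nbeta, rfl, rfl⟩

theorem lccStep_case {T : S.TyName} {c : S.CName T} (args : Fin (S.arity T c) → Exp S)
    (alts : (c : S.CName T) → Exp S) :
    lccStep (.caseE T (.constr T c args) alts) (subst (instSub args) (alts c)) :=
  ⟨.hole, _, _, .ncase, rfl, rfl⟩

theorem lccStep_plugA (A : ACtx S) {s s' : Exp S} (h : lccStep s s') :
    lccStep (plugA A s) (plugA A s') :=
  lccStep_iff_spineStep.mpr ((lccStep_iff_spineStep.mp h).plugA A)

theorem rtg_plugA (A : ACtx S) {s s' : Exp S} (h : s ⟶* s') : plugA A s ⟶* plugA A s' :=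
  Relation.ReflTransGen.lift (plugA A) (fun _ _ => lccStep_plugA A) _ _ h

theorem closed_of_rtg {s t : Exp S} (h : s ⟶* t) (hs : closed s) : closed t := by
  induction h with
  | refl => exact hs
  | tail _ hstep ih => exact (lccStep_iff_spineStep.mp hstep).closed ih

theorem lccConvTo_eq_of_lccStep {s s' : Exp S} (h : lccStep s s') :
    lccConvTo s = lccConvTo s' := by
  funext v
  refine propext ⟨fun ⟨hsv, hv⟩ => ⟨?_, hv⟩, fun ⟨hs'v, hv⟩ => ⟨.head h hs'v, hv⟩⟩
  rcases hsv.cases_head with rfl | ⟨s'', hs'', hs''v⟩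
  · exact absurd h (not_lccStep_of_isValue hv)
  · rwa [lccStep_deterministic h hs'']

theorem lccConvTo_eq_of_rtg {s s' : Exp S} (h : s ⟶* s') : lccConvTo s = lccConvTo s' := by
  induction h with
  | refl => rfl
  | tail _ hstep ih => rw [ih, lccConvTo_eq_of_lccStep hstep]

theorem lccConv_iff_of_rtg {s s' : Exp S} (h : s ⟶* s') : lccConv s ↔ lccConv s' := by
  simp only [lccConv, lccConvTo_eq_of_rtg h]

theorem exists_lccStep_of_lccConv {s : Exp S} (h : lccConv s) (hs : ¬ isValue s) :
    ∃ t, lccStep s t ∧ lccConv t := by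
  obtain ⟨v, hsv, hv⟩ := h
  rcases hsv.cases_head with rfl | ⟨t, hst, htv⟩
  · exact absurd hv hs
  · exact ⟨t, hst, v, htv, hv⟩

theorem lccConv_of_lccConv_plugA {A : ACtx S} {s : Exp S} (h : lccConv (plugA A s)) :
    lccConv s := by
  obtain ⟨w, hw, hwv⟩ := h
  generalize hp : plugA A s = p at hw
  induction hw using Relation.ReflTransGen.head_induction_on generalizing s with
  | refl => exact ⟨s, .refl, isValue_of_isValue_plugA (hp ▸ hwv)⟩
  | head hstep _ ih =>
      by_cases hs : isValue s
      · exact ⟨s, .refl, hs⟩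
      obtain ⟨s', hss', rfl⟩ := (lccStep_iff_spineStep.mp (hp ▸ hstep)).of_plugA hs
      obtain ⟨v, hs'v, hv⟩ := ih rfl
      exact ⟨v, .head (lccStep_iff_spineStep.mpr hss') hs'v, hv⟩

theorem not_lccConv_of_lccStep_self {s : Exp S} (h : lccStep s s) : ¬ lccConv s := by
  rintro ⟨v, hsv, hv⟩
  have hvs : v = s := by
    clear hv
    induction hsv with
    | refl => rfl
    | tail _ hstep ih => subst ih; exact (lccStep_deterministic h hstep).symm
  exact not_lccStep_of_isValue hv (hvs ▸ h)

theorem not_lccConv_Omega : ¬ lccConv (Omega : Exp S) :=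
  not_lccConv_of_lccStep_self (lccStep_beta _ _)

theorem not_lccConv_app_constr {T : S.TyName} {c : S.CName T} {args : Fin (S.arity T c) → Exp S}
    {r : Exp S} : ¬ lccConv (.app (.constr T c args) r) := by
  intro h
  obtain ⟨t, hstep, -⟩ := exists_lccStep_of_lccConv h id
  obtain ⟨u, hu, -⟩ :=
    (lccStep_iff_spineStep.mp hstep).app_of_isValue (v := .constr T c args) trivial
  cases hu

theorem not_lccConv_caseE_lam {T : S.TyName} {u : Exp S} {alts : (c : S.CName T) → Exp S} :
    ¬ lccConv (.caseE T (.lam u) alts) := by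
  intro h
  obtain ⟨t, hstep, -⟩ := exists_lccStep_of_lccConv h id
  obtain ⟨c, args, hu, -⟩ := (lccStep_iff_spineStep.mp hstep).caseE_of_isValue (v := .lam u) trivial
  cases hu

theorem exists_constr_of_lccConv_caseE {T : S.TyName} {c : S.CName T} {v : Exp S}
    {alts : (c : S.CName T) → Exp S} (halts : ∀ c' ≠ c, alts c' = Omega)
    (h : lccConv (.caseE T v alts)) (hv : isValue v) : ∃ args, v = .constr T c args := by
  obtain ⟨t, hstep, ht⟩ := exists_lccStep_of_lccConv h id
  obtain ⟨c', args, rfl, rfl⟩ := (lccStep_iff_spineStep.mp hstep).caseE_of_isValue hv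
  by_cases hc : c' = c
  · subst hc; exact ⟨args, rfl⟩
  · rw [halts c' hc] at ht
    exact absurd ht not_lccConv_Omega

theorem Qlcc_subset_range_plugA : Qlcc S ⊆ Set.range plugA := by
  rintro f (⟨r, -, -, rfl⟩ | ⟨T, c, i, rfl⟩ | ⟨T, c, rfl⟩)
  · exact ⟨.appA .hole r, rfl⟩
  · exact ⟨.caseA T .hole _, rfl⟩
  · exact ⟨.caseA T .hole _, rfl⟩

theorem closed_of_mem_Qlcc {f : Exp S → Exp S} (hf : f ∈ Qlcc S) {v : Exp S} (hv : closed v) :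
    closed (f v) := by
  rcases hf with ⟨r, -, hr, rfl⟩ | ⟨T, c, i, rfl⟩ | ⟨T, c, rfl⟩
  · exact ⟨hv, hr⟩
  · refine ⟨hv, fun c' => ?_⟩
    by_cases hc : c' = c
    · subst hc
      simp [closedUnder]
    · simpa [caseSelCtx, hc] using closedUnder_Omega _
  · refine ⟨hv, fun c' => ?_⟩
    by_cases hc : c' = c
    · simpa [caseTrueCtx, hc] using closedUnder_trueE _
    · simpa [caseTrueCtx, hc] using closedUnder_Omega _

theorem lccStep_caseSelCtx_constr {T : S.TyName} {c : S.CName T} (i : Fin (S.arity T c))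
    (args : Fin (S.arity T c) → Exp S) :
    lccStep (caseSelCtx T c i (.constr T c args)) (args i) := by
  simpa [caseSelCtx, subst, instSub] using lccStep_case args
    (fun c' => letI := S.deceq T; if c' = c then (.var i : Exp S) else Omega)

theorem lccStep_caseTrueCtx_constr {T : S.TyName} {c : S.CName T}
    (args : Fin (S.arity T c) → Exp S) : lccStep (caseTrueCtx T c (.constr T c args)) trueE := by
  simpa [caseTrueCtx, subst_trueE] using lccStep_case args
    (fun c' => letI := S.deceq T; if c' = c then (trueE : Exp S) else Omega)

theorem app_mem_Qlcc {r : Exp S} (hr : lfree r) (hrc : closed r) :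
    (fun e => Exp.app e r) ∈ Qlcc S :=
  .inl ⟨r, hr, hrc, rfl⟩

theorem caseSelCtx_mem_Qlcc (T : S.TyName) (c : S.CName T) (i : Fin (S.arity T c)) :
    caseSelCtx T c i ∈ Qlcc S :=
  .inr (.inl ⟨T, c, i, rfl⟩)

theorem caseTrueCtx_mem_Qlcc (T : S.TyName) (c : S.CName T) : caseTrueCtx T c ∈ Qlcc S :=
  .inr (.inr ⟨T, c, rfl⟩)

section gfp

variable {α : Type*} {F : (α → α → Prop) → α → α → Prop}

theorem gfpRel_unfold (hF : Monotone F) {a b : α} (h : gfpRel F a b) : F (gfpRel F) a b := by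
  obtain ⟨η, hη, hab⟩ := h
  exact hF (fun x y hxy => ⟨η, hη, hxy⟩) a b (hη a b hab)

theorem gfpRel_of_imp (hF : Monotone F) {a b a' b' : α} (h : ∀ η, F η a' b' → F η a b)
    (h' : gfpRel F a' b') : gfpRel F a b := by
  refine ⟨fun x y => gfpRel F x y ∨ (x = a ∧ y = b), ?_, .inr ⟨rfl, rfl⟩⟩
  have hmono : F (gfpRel F) ≤ F (fun x y => gfpRel F x y ∨ (x = a ∧ y = b)) :=
    hF fun _ _ => .inl
  rintro x y (hxy | ⟨rfl, rfl⟩)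
  · exact hmono x y (gfpRel_unfold hF hxy)
  · exact hmono x y (h _ (gfpRel_unfold hF h'))

theorem gfpRel_congr (hF : Monotone F) {a b a' b' : α} (h : ∀ η, F η a b ↔ F η a' b') :
    gfpRel F a b ↔ gfpRel F a' b' :=
  ⟨gfpRel_of_imp hF fun η => (h η).mp, gfpRel_of_imp hF fun η => (h η).mpr⟩

end gfp

theorem openL_mono : Monotone (openL (S := S)) :=
  fun _ _ h _ _ ho σ hσ hs ht => h _ _ (ho σ hσ hs ht)

theorem Flcc_mono : Monotone (Flcc (S := S)) := by
  intro η μ h s t ⟨hlam, hconstr⟩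
  refine ⟨fun s' hs' => ?_, fun T c args hargs => ?_⟩
  · rcases hlam s' hs' with ⟨t', ht', ho⟩ | hbot
    · exact .inl ⟨t', ht', openL_mono h _ _ ho⟩
    · exact .inr hbot
  · obtain ⟨targs, ht, hall⟩ := hconstr T c args hargs
    exact ⟨targs, ht, fun i => h _ _ (hall i)⟩

theorem FQlcc_mono (𝒬 : Set (Exp S → Exp S)) : Monotone (FQlcc 𝒬) := by
  intro η μ h s t hF v₁ hv₁
  obtain ⟨v₂, hv₂, hall⟩ := hF v₁ hv₁
  exact ⟨v₂, hv₂, fun f hf => h _ _ (hall f hf)⟩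

theorem simLcc_iff_of_rtg {s s' t t' : Exp S} (hs : s ⟶* s') (ht : t ⟶* t') :
    simLcc s t ↔ simLcc s' t' :=
  gfpRel_congr Flcc_mono fun η => by
    simp only [Flcc, lccConvTo_eq_of_rtg hs, lccConvTo_eq_of_rtg ht]

theorem simQlcc_iff_of_rtg {𝒬 : Set (Exp S → Exp S)} {s s' t t' : Exp S} (hs : s ⟶* s')
    (ht : t ⟶* t') : simQlcc 𝒬 s t ↔ simQlcc 𝒬 s' t' :=
  gfpRel_congr (FQlcc_mono 𝒬) fun η => by
    simp only [FQlcc, lccConvTo_eq_of_rtg hs, lccConvTo_eq_of_rtg ht]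

theorem simLcc_refl (s : Exp S) : simLcc s s := by
  refine ⟨Eq, ?_, rfl⟩
  rintro x _ rfl
  exact ⟨fun s' hs' => .inl ⟨s', hs', fun _ _ _ _ => rfl⟩,
    fun _ _ args h => ⟨args, h, fun _ => rfl⟩⟩

theorem simLcc_of_not_lccConv {s t : Exp S} (h : ¬ lccConv s) : simLcc s t := by
  refine ⟨fun x _ => ¬ lccConv x, fun x y hx => ⟨fun s' hs' => ?_, fun _ _ _ hargs => ?_⟩, h⟩
  · exact absurd ⟨_, hs'⟩ hx
  · exact absurd ⟨_, hargs⟩ hx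

theorem simLcc_of_lccConv_imp {s t : Exp S} (h : lccConv s → simLcc s t) : simLcc s t := by
  by_cases hs : lccConv s
  · exact h hs
  · exact simLcc_of_not_lccConv hs

theorem simQlcc.lccConv {𝒬 : Set (Exp S → Exp S)} {s t : Exp S} (h : simQlcc 𝒬 s t)
    (hs : lccConv s) : lccConv t := by
  obtain ⟨v₁, hv₁⟩ := hs
  obtain ⟨v₂, hv₂, -⟩ := gfpRel_unfold (FQlcc_mono 𝒬) h v₁ hv₁
  exact ⟨v₂, hv₂⟩

theorem applyAll_append_singleton (l : List (Exp S → Exp S)) (f : Exp S → Exp S) (s : Exp S) :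
    applyAll (l ++ [f]) s = applyAll l (f s) := by
  simp [applyAll]

theorem rtg_applyAll {l : List (Exp S → Exp S)} (hl : ∀ f ∈ l, f ∈ Set.range plugA)
    {s s' : Exp S} (h : s ⟶* s') : applyAll l s ⟶* applyAll l s' := by
  induction l with
  | nil => exact h
  | cons f l ih =>
      obtain ⟨A, rfl⟩ := hl f (List.mem_cons_self)
      exact rtg_plugA A (ih fun g hg => hl g (List.mem_cons_of_mem _ hg))

theorem lccConv_of_lccConv_applyAll {l : List (Exp S → Exp S)}
    (hl : ∀ f ∈ l, f ∈ Set.range plugA) {s : Exp S} (h : lccConv (applyAll l s)) : lccConv s := by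
  induction l with
  | nil => exact h
  | cons f l ih =>
      obtain ⟨A, rfl⟩ := hl f (List.mem_cons_self)
      exact ih (fun g hg => hl g (List.mem_cons_of_mem _ hg)) (lccConv_of_lccConv_plugA h)

section

variable {𝒬 : Set (Exp S → Exp S)}

theorem leQlcc_of_simQlcc (h𝒬 : 𝒬 ⊆ Set.range plugA) {s t : Exp S} (h : simQlcc 𝒬 s t) :
    leQlcc 𝒬 s t := by
  intro l hl
  induction l using List.reverseRecOn generalizing s t with
  | nil => exact h.lccConv
  | append_singleton l f ih =>
      have hlf : ∀ g ∈ l ++ [f], g ∈ Set.range plugA := fun g hg => h𝒬 (hl g hg)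
      have hl' : ∀ g ∈ l, g ∈ 𝒬 := fun g hg => hl g (by simp [hg])
      intro hs
      obtain ⟨v₁, hv₁⟩ := lccConv_of_lccConv_applyAll hlf hs
      obtain ⟨v₂, hv₂, hQ⟩ := gfpRel_unfold (FQlcc_mono 𝒬) h v₁ hv₁
      have hsv := rtg_applyAll hlf hv₁.1
      have htv := rtg_applyAll hlf hv₂.1
      simp only [applyAll_append_singleton] at hsv htv
      rw [applyAll_append_singleton, lccConv_iff_of_rtg hsv] at hs
      rw [applyAll_append_singleton, lccConv_iff_of_rtg htv]
      exact ih (hQ f (hl f (by simp))) hl' hs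

theorem simQlcc_of_leQlcc (h𝒬 : 𝒬 ⊆ Set.range plugA) {s t : Exp S} (h : leQlcc 𝒬 s t) :
    simQlcc 𝒬 s t := by
  refine ⟨leQlcc 𝒬, fun x y hxy v₁ hv₁ => ?_, h⟩
  obtain ⟨v₂, hv₂⟩ := hxy [] (by simp) ⟨v₁, hv₁⟩
  refine ⟨v₂, hv₂, fun f hf l hl hconv => ?_⟩
  have hlf : ∀ g ∈ l ++ [f], g ∈ 𝒬 := by simpa [or_imp, forall_and] using ⟨hl, hf⟩
  have hxv := rtg_applyAll (fun g hg => h𝒬 (hlf g hg)) hv₁.1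
  have hyv := rtg_applyAll (fun g hg => h𝒬 (hlf g hg)) hv₂.1
  simp only [applyAll_append_singleton] at hxv hyv
  rw [← lccConv_iff_of_rtg hxv] at hconv
  rw [← lccConv_iff_of_rtg hyv, ← applyAll_append_singleton]
  exact hxy _ hlf (by rwa [applyAll_append_singleton])

theorem simQlcc_iff_leQlcc (h𝒬 : 𝒬 ⊆ Set.range plugA) {s t : Exp S} :
    simQlcc 𝒬 s t ↔ leQlcc 𝒬 s t :=
  ⟨leQlcc_of_simQlcc h𝒬, simQlcc_of_leQlcc h𝒬⟩

end

theorem simLcc_of_simQlcc {s t : Exp S} (hs : closed s) (ht : closed t)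
    (h : simQlcc (Qlcc S) s t) : simLcc s t := by
  refine ⟨fun x y => closed x ∧ closed y ∧ simQlcc (Qlcc S) x y, ?_, hs, ht, h⟩
  rintro x y ⟨hx, hy, hxy⟩
  have hF := gfpRel_unfold (FQlcc_mono _) hxy
  refine ⟨fun s' hs' => ?_, fun T c args hargs => ?_⟩
  · obtain ⟨v, hv, hQ⟩ := hF _ hs'
    have hs'c : closedUnder 1 s' := closed_of_rtg hs'.1 hx
    have happ : ∀ σ : ℕ → Exp S, (∀ k, lfree (σ k)) →
        simQlcc (Qlcc S) (.app (.lam s') (closeSub σ 0)) (.app v (closeSub σ 0)) :=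
      fun σ hσ => hQ _ (app_mem_Qlcc (lfree_closeSub hσ 0) (closed_closeSub σ 0))
    rcases hv.2.eq_lam_or_constr with ⟨t', rfl⟩ | ⟨T, c, targs, rfl⟩
    · have ht'c : closedUnder 1 t' := closed_of_rtg hv.1 hy
      refine .inl ⟨t', hv, fun σ hσ hsσ htσ => ⟨hsσ, htσ, ?_⟩⟩
      rw [subst_eq_subst_consSub_closeSub hs'c hsσ, subst_eq_subst_consSub_closeSub ht'c htσ]
      exact (simQlcc_iff_of_rtg (.single (lccStep_beta _ _)) (.single (lccStep_beta _ _))).mp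
        (happ σ hσ)
    · refine .inr ⟨T, c, targs, hv, fun σ hσ hsσ hconv => ?_⟩
      rw [subst_eq_subst_consSub_closeSub hs'c hsσ,
        ← lccConv_iff_of_rtg (.single (lccStep_beta _ _))] at hconv
      exact not_lccConv_app_constr ((happ σ hσ).lccConv hconv)
  · obtain ⟨v, hv, hQ⟩ := hF _ hargs
    have htrue := simQlcc.lccConv (hQ _ (caseTrueCtx_mem_Qlcc T c))
      ⟨trueE, .single (lccStep_caseTrueCtx_constr args), trivial⟩
    obtain ⟨targs, rfl⟩ := exists_constr_of_lccConv_caseE (fun _ hc => if_neg hc) htrue hv.2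
    have hargsc : closed (Exp.constr T c args) := closed_of_rtg hargs.1 hx
    have htargsc : closed (Exp.constr T c targs) := closed_of_rtg hv.1 hy
    refine ⟨targs, hv, fun i => ⟨hargsc i, htargsc i, ?_⟩⟩
    exact (simQlcc_iff_of_rtg (.single (lccStep_caseSelCtx_constr i args))
      (.single (lccStep_caseSelCtx_constr i targs))).mp (hQ _ (caseSelCtx_mem_Qlcc T c i))

theorem simLcc_Qlcc_lam_lam {s' t' : Exp S} (hs' : closedUnder 1 s') (ht' : closedUnder 1 t')
    (h : openL simLcc s' t') : ∀ f ∈ Qlcc S, simLcc (f (.lam s')) (f (.lam t')) := by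
  rintro f (⟨r, hr, hrc, rfl⟩ | ⟨T, c, i, rfl⟩ | ⟨T, c, rfl⟩)
  · exact (simLcc_iff_of_rtg (.single (lccStep_beta _ _)) (.single (lccStep_beta _ _))).mpr
      (h _ (lfree_consSub hr) (closed_subst_consSub hs' hrc) (closed_subst_consSub ht' hrc))
  all_goals exact simLcc_of_not_lccConv not_lccConv_caseE_lam

theorem simLcc_Qlcc_lam_constr {s' : Exp S} (hs' : closedUnder 1 s') (h : cBot s')
    {T : S.TyName} {c : S.CName T} (targs : Fin (S.arity T c) → Exp S) :
    ∀ f ∈ Qlcc S, simLcc (f (.lam s')) (f (.constr T c targs)) := by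
  rintro f (⟨r, hr, hrc, rfl⟩ | ⟨T, c, i, rfl⟩ | ⟨T, c, rfl⟩)
  · refine simLcc_of_not_lccConv ?_
    rw [lccConv_iff_of_rtg (.single (lccStep_beta _ _))]
    exact h _ (lfree_consSub hr) (closed_subst_consSub hs' hrc)
  all_goals exact simLcc_of_not_lccConv not_lccConv_caseE_lam

theorem simLcc_Qlcc_constr {T : S.TyName} {c : S.CName T} {args targs : Fin (S.arity T c) → Exp S}
    (h : ∀ i, simLcc (args i) (targs i)) :
    ∀ f ∈ Qlcc S, simLcc (f (.constr T c args)) (f (.constr T c targs)) := by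
  rintro f (⟨r, -, -, rfl⟩ | ⟨T', c', i, rfl⟩ | ⟨T', c', rfl⟩)
  · exact simLcc_of_not_lccConv not_lccConv_app_constr
  · refine simLcc_of_lccConv_imp fun hconv => ?_
    obtain ⟨_, heq⟩ := exists_constr_of_lccConv_caseE (fun _ hc => if_neg hc) hconv trivial
    cases heq
    exact (simLcc_iff_of_rtg (.single (lccStep_caseSelCtx_constr i args))
      (.single (lccStep_caseSelCtx_constr i targs))).mpr (h i)
  · refine simLcc_of_lccConv_imp fun hconv => ?_
    obtain ⟨_, heq⟩ := exists_constr_of_lccConv_caseE (fun _ hc => if_neg hc) hconv trivial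
    cases heq
    exact (simLcc_iff_of_rtg (.single (lccStep_caseTrueCtx_constr args))
      (.single (lccStep_caseTrueCtx_constr targs))).mpr (simLcc_refl trueE)

theorem simQlcc_of_simLcc {s t : Exp S} (hs : closed s) (ht : closed t) (h : simLcc s t) :
    simQlcc (Qlcc S) s t := by
  refine ⟨fun x y => closed x ∧ closed y ∧ simLcc x y, ?_, hs, ht, h⟩
  rintro x y ⟨hx, hy, hxy⟩ v₁ hv₁
  obtain ⟨hlam, hconstr⟩ := gfpRel_unfold Flcc_mono hxy
  suffices ∃ v₂, lccConvTo y v₂ ∧ ∀ f ∈ Qlcc S, simLcc (f v₁) (f v₂) by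
    obtain ⟨v₂, hv₂, hQ⟩ := this
    exact ⟨v₂, hv₂, fun f hf => ⟨closed_of_mem_Qlcc hf (closed_of_rtg hv₁.1 hx),
      closed_of_mem_Qlcc hf (closed_of_rtg hv₂.1 hy), hQ f hf⟩⟩
  rcases hv₁.2.eq_lam_or_constr with ⟨s', rfl⟩ | ⟨T, c, args, rfl⟩
  · have hs' : closedUnder 1 s' := closed_of_rtg hv₁.1 hx
    rcases hlam s' hv₁ with ⟨t', hv₂, ho⟩ | ⟨T, c, targs, hv₂, hbot⟩
    · exact ⟨_, hv₂, simLcc_Qlcc_lam_lam hs' (closed_of_rtg hv₂.1 hy) ho⟩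
    · exact ⟨_, hv₂, simLcc_Qlcc_lam_constr hs' hbot targs⟩
  · obtain ⟨targs, hv₂, hargs⟩ := hconstr T c args hv₁
    exact ⟨_, hv₂, simLcc_Qlcc_constr hargs⟩

theorem simLcc_iff_simQlcc {s t : Exp S} (hs : closed s) (ht : closed t) :
    simLcc s t ↔ simQlcc (Qlcc S) s t :=
  ⟨simQlcc_of_simLcc hs ht, simLcc_of_simQlcc hs ht⟩

theorem openL_congr {η μ : Exp S → Exp S → Prop}
    (h : ∀ s t, closed s → closed t → (η s t ↔ μ s t)) (s t : Exp S) :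
    openL η s t ↔ openL μ s t :=
  forall₄_congr fun _ _ hs ht => h _ _ hs ht

/-- In `L_lcc`, applicative similarity, `Q_lcc`-similarity and the
inductive `Q_lcc`-preorder all coincide on closed expressions, and their open
extensions coincide as well. -/
theorem lcc_Q_similarity_coincide (S : Sig) :
    (∀ s t : Exp S, lfree s → lfree t → closed s → closed t →
      ((simLcc s t ↔ simQlcc (Qlcc S) s t) ∧
       (simQlcc (Qlcc S) s t ↔ leQlcc (Qlcc S) s t))) ∧
    (∀ s t : Exp S, lfree s → lfree t →
      ((openL simLcc s t ↔ openL (simQlcc (Qlcc S)) s t) ∧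
       (openL (simQlcc (Qlcc S)) s t ↔ openL (leQlcc (Qlcc S)) s t))) := by
  have hQ : Qlcc S ⊆ Set.range plugA := Qlcc_subset_range_plugA
  refine ⟨fun s t _ _ hs ht => ⟨simLcc_iff_simQlcc hs ht, simQlcc_iff_leQlcc hQ⟩,
    fun s t _ _ => ⟨?_, ?_⟩⟩
  · exact openL_congr (fun _ _ => simLcc_iff_simQlcc) s t
  · exact openL_congr (fun _ _ _ _ => simQlcc_iff_leQlcc hQ) s t

end Core
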